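/- Let m ∈ ℕ, let β₁, …, β_m ∈ ℂ with |β_j| < 1, set κ_j = (1 − |β_j|²)^{1/2}, and let t₁, …, t_m, s₁, …, s_m ∈ ℝ. Put β = diag(β₁, …, β_m), κ = diag(κ₁, …, κ_m), θ₁ = diag(e^{it₁}, …, e^{it_m}), θ₂ = diag(e^{is₁}, …, e^{is_m}), and let B be the 2m×2m block matrix B = [[θ₁ − β, κ], [κ, β* − θ₂*]]. Then rank(B) ≥ m, and rank(B) = m if and only if for every j ∈ {1, …, m} one has e^{it_j} = w_j/conj(w_j), where w_j = i(β_j e^{−is_j/2} − e^{is_j/2}) (≠ 0); equivalently, if and only if e^{it_j}·conj(β_j) + e^{−is_j}·β_j − e^{i(t_j−s_j)} − 1 = 0 for every j. -/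

import Mathlib

/-!
Since the blocks `κ` are invertible, swapping the two block rows and taking the Schur complement
of `diagonal κ` shows that a matrix `[[diagonal a, diagonal b], [diagonal c, diagonal d]]` with
every `c j ≠ 0` has rank `m` plus the number of `j` with `a j * d j - b j * c j ≠ 0`. For `B`,
because `κ_j² = 1 - |β_j|²`, this `2 × 2` determinant is exactly
`e^{it_j} conj β_j + e^{-is_j} β_j - e^{i(t_j - s_j)} - 1`, and `e^{it_j} conj w_j - w_j` is that
same expression times the unit `-i e^{is_j/2}`; finally `w_j ≠ 0` since `|β_j| < 1`.
-/

open Matrix Complex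
open ComplexConjugate

namespace Matrix

variable {m n R : Type*} [Fintype m] [Fintype n] [DecidableEq m] [DecidableEq n] [CommRing R]

theorem rank_fromBlocks_of_invertible₁₁ (A : Matrix m m R) (B : Matrix m n R)
    (C : Matrix n m R) (D : Matrix n n R) [Invertible A] :
    (fromBlocks A B C D).rank = (fromBlocks A 0 0 (D - C * ⅟A * B)).rank := by
  rw [fromBlocks_eq_of_invertible₁₁, rank_mul_eq_left_of_isUnit_det,
    rank_mul_eq_right_of_isUnit_det] <;> simp

theorem rank_fromBlocks_diagonal {K : Type*} [Field K] (a b c d : m → K) (hc : ∀ j, c j ≠ 0) :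
    (fromBlocks (diagonal a) (diagonal b) (diagonal c) (diagonal d)).rank =
      Fintype.card m + Nat.card {j // a j * d j - b j * c j ≠ 0} := by
  classical
  let : Invertible (diagonal c) :=
    invertibleOfRightInverse _ (diagonal c⁻¹) (by simp [diagonal_mul_diagonal, hc])
  have hswap := rank_submatrix (fromBlocks (diagonal a) (diagonal b) (diagonal c) (diagonal d))
    (Equiv.sumComm m m) (Equiv.refl _)
  have hschur : diagonal b - diagonal a * ⅟(diagonal c) * diagonal d =
      diagonal fun j => b j - a j * (c j)⁻¹ * d j := by
    simp [show ⅟(diagonal c) = diagonal c⁻¹ from rfl, diagonal_mul_diagonal]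
  rw [← hswap, Equiv.sumComm_apply, Equiv.coe_refl, fromBlocks_submatrix_sum_swap_left,
    submatrix_id_id, rank_fromBlocks_of_invertible₁₁, hschur, fromBlocks_diagonal, rank_diagonal,
    Fintype.card_congr Equiv.subtypeSum, Fintype.card_sum]
  congr 1
  · exact Fintype.card_congr (Equiv.subtypeUnivEquiv hc)
  · rw [← Nat.card_eq_fintype_card]
    refine Nat.card_congr (Equiv.subtypeEquivRight fun j => not_congr ?_)
    rw [Sum.elim_inr, show b j - a j * (c j)⁻¹ * d j = -(a j * d j - b j * c j) * (c j)⁻¹ by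
      field_simp [hc j]; ring]
    simp [hc j, sub_eq_zero, eq_comm]

theorem rank_fromBlocks_diagonal_eq_card_iff {K : Type*} [Field K] (a b c d : m → K)
    (hc : ∀ j, c j ≠ 0) :
    (fromBlocks (diagonal a) (diagonal b) (diagonal c) (diagonal d)).rank = Fintype.card m ↔
      ∀ j, a j * d j - b j * c j = 0 := by
  simp [rank_fromBlocks_diagonal a b c d hc, Finite.card_eq_zero_iff, isEmpty_subtype]

end Matrix

namespace Complex

theorem conj_exp_I_mul_ofReal (x : ℝ) : conj (exp (I * x)) = exp (-I * x) := by
  rw [← exp_conj, map_mul, conj_I, conj_ofReal]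

theorem ofReal_sqrt_one_sub_norm_sq_sq {β : ℂ} (hβ : ‖β‖ ≤ 1) :
    ((√(1 - ‖β‖ ^ 2) : ℝ) : ℂ) ^ 2 = 1 - β * conj β := by
  rw [← ofReal_pow, Real.sq_sqrt (by nlinarith [norm_nonneg β]), mul_conj, ← Complex.sq_norm]
  push_cast; ring

theorem I_mul_sub_exp_ne_zero {β : ℂ} (hβ : ‖β‖ < 1) (s : ℝ) :
    I * (β * exp (-I * (s / 2)) - exp (I * (s / 2))) ≠ 0 := by
  refine mul_ne_zero I_ne_zero (sub_ne_zero.mpr fun h => hβ.ne ?_)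
  simpa [norm_exp] using congrArg norm h

theorem exp_I_mul_mul_conj_sub_eq (β : ℂ) (t s : ℝ) :
    exp (I * t) * conj (I * (β * exp (-I * (s / 2)) - exp (I * (s / 2)))) -
        I * (β * exp (-I * (s / 2)) - exp (I * (s / 2))) =
      -I * exp (I * (s / 2)) * (exp (I * t) * conj β + exp (-I * s) * β -
        exp (I * (t - s)) - 1) := by
  have hs : exp (-I * s) * exp (I * (s / 2)) = exp (-I * (s / 2)) := by
    rw [← exp_add]; ring_nf
  have hts : exp (I * (t - s)) * exp (I * (s / 2)) = exp (I * t) * exp (-I * (s / 2)) := by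
    rw [← exp_add, ← exp_add]; ring_nf
  have hconj : conj (exp (I * (s / 2))) = exp (-I * (s / 2)) := by
    simpa using conj_exp_I_mul_ofReal (s / 2)
  have hconj' : conj (exp (-I * (s / 2))) = exp (I * (s / 2)) := by
    rw [← hconj, conj_conj]
  simp only [map_mul, map_sub, conj_I, hconj, hconj']
  linear_combination (I * β) * hs - I * hts

theorem exp_sub_mul_conj_sub_exp_sub_mul_self {β k : ℂ} (hk : k ^ 2 = 1 - β * conj β) (t s : ℝ) :
    (exp (I * t) - β) * (conj β - exp (-I * s)) - k * k =
      exp (I * t) * conj β + exp (-I * s) * β - exp (I * (t - s)) - 1 := by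
  have hts : exp (I * t) * exp (-I * s) = exp (I * (t - s)) := by
    rw [← exp_add]; ring_nf
  linear_combination -hk - hts

theorem exp_I_mul_eq_div_conj_iff {β : ℂ} (hβ : ‖β‖ < 1) (t s : ℝ) :
    exp (I * t) = I * (β * exp (-I * (s / 2)) - exp (I * (s / 2))) /
        conj (I * (β * exp (-I * (s / 2)) - exp (I * (s / 2)))) ↔
      exp (I * t) * conj β + exp (-I * s) * β - exp (I * (t - s)) - 1 = 0 := by
  rw [eq_div_iff ((map_ne_zero _).mpr (I_mul_sub_exp_ne_zero hβ s)), ← sub_eq_zero,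
    exp_I_mul_mul_conj_sub_eq]
  simp [I_ne_zero, exp_ne_zero]

end Complex

/-- For `β₁,…,β_m ∈ ℂ` with `|β_j| < 1`, `κ_j = (1 - |β_j|²)^{1/2}`, and real phases
`t_j, s_j`, the block matrix `B = [[θ₁ - β, κ], [κ, βᴴ - θ₂ᴴ]]` (all blocks diagonal)
has `rank B ≥ m`, with `rank B = m` iff `e^{it_j} = w_j/conj w_j` for every `j`
(where `w_j = i(β_j e^{-is_j/2} - e^{is_j/2}) ≠ 0`), equivalently iff
`e^{it_j} conj β_j + e^{-is_j} β_j - e^{i(t_j - s_j)} - 1 = 0` for every `j`. -/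
theorem cmv_diagonal_block_rank (m : ℕ) (β : Fin m → ℂ) (hβ : ∀ j, ‖β j‖ < 1)
    (κ : Fin m → ℝ) (hκ : ∀ j, κ j = Real.sqrt (1 - ‖β j‖ ^ 2))
    (t s : Fin m → ℝ) (w : Fin m → ℂ)
    (hw : ∀ j, w j = Complex.I * (β j * Complex.exp (-Complex.I * (s j / 2)) -
            Complex.exp (Complex.I * (s j / 2))))
    (B : Matrix (Fin m ⊕ Fin m) (Fin m ⊕ Fin m) ℂ)
    (hB : B = fromBlocks
      (diagonal (fun j => Complex.exp (Complex.I * t j)) - diagonal β)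
      (diagonal (fun j => (κ j : ℂ)))
      (diagonal (fun j => (κ j : ℂ)))
      ((diagonal β)ᴴ - (diagonal (fun j => Complex.exp (Complex.I * s j)))ᴴ)) :
    (∀ j, w j ≠ 0) ∧
    m ≤ B.rank ∧
    (B.rank = m ↔ ∀ j, Complex.exp (Complex.I * t j) = w j / conj (w j)) ∧
    (B.rank = m ↔ ∀ j, Complex.exp (Complex.I * t j) * conj (β j) +
      Complex.exp (-Complex.I * s j) * β j -
      Complex.exp (Complex.I * (t j - s j)) - 1 = 0) := by
  have hκ_sq (j : Fin m) : (κ j : ℂ) ^ 2 = 1 - β j * conj (β j) := by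
    rw [hκ j]; exact ofReal_sqrt_one_sub_norm_sq_sq (hβ j).le
  have hκ_ne (j : Fin m) : (κ j : ℂ) ≠ 0 := by
    rw [hκ j, ofReal_ne_zero, Real.sqrt_ne_zero']
    nlinarith [hβ j, norm_nonneg (β j)]
  have hB_diag : B = fromBlocks
      (diagonal fun j => exp (I * t j) - β j) (diagonal fun j => (κ j : ℂ))
      (diagonal fun j => (κ j : ℂ)) (diagonal fun j => conj (β j) - exp (-I * s j)) := by
    simp only [hB, diagonal_conjTranspose, diagonal_sub, Pi.star_apply, RCLike.star_def,
      conj_exp_I_mul_ofReal]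
  have hrank_ge : m ≤ B.rank := by
    rw [hB_diag, rank_fromBlocks_diagonal _ _ _ _ hκ_ne, Fintype.card_fin]
    exact Nat.le_add_right _ _
  have hrank_eq : B.rank = m ↔ ∀ j, exp (I * t j) * conj (β j) + exp (-I * s j) * β j -
      exp (I * (t j - s j)) - 1 = 0 := by
    rw [hB_diag]
    convert rank_fromBlocks_diagonal_eq_card_iff _ _ _ _ hκ_ne using 1
    · rw [Fintype.card_fin]
    · simp only [exp_sub_mul_conj_sub_exp_sub_mul_self (hκ_sq _)]
  refine ⟨fun j => hw j ▸ I_mul_sub_exp_ne_zero (hβ j) (s j), hrank_ge, ?_, hrank_eq⟩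
  rw [hrank_eq]
  exact forall_congr' fun j => by rw [hw j, exp_I_mul_eq_div_conj_iff (hβ j)]
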